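/- Let f₁, …, f_N : ℝ^d → ℝ be twice continuously differentiable, let θ_i* satisfy ∇f_i(θ_i*) = 0, and write 𝛉* = (θ₁*,…,θ_N*) ∈ ℝ^{dN}. For each t ≥ 0 let ℳ^t ∈ ℝ^{dN×dN} be a symmetric block matrix with d×d diagonal blocks M_{ij}^t, and consider the multi-task gradient descent iteration θ_i^{t+1} = Σ_{j=1}^N M_{ij}^t θ_j^t − α∇f_i(θ_i^t) starting from 𝛉⁰. Let H^t = diag(H₁^t,…,H_N^t) with H_i^t = ∫₀¹ ∇²f_i(θ_i* + μ(θ_i^t − θ_i*)) dμ. Then for every T ≥ 1, ‖𝛉^T − 𝛉*‖ ≤ (∏_{τ=0}^{T−1} ρ(ℳ^τ − αH^τ))·‖𝛉⁰ − 𝛉*‖ + Σ_{τ=0}^{T−1} (∏_{r=τ+1}^{T−1} ρ(ℳ^r − αH^r))·‖(ℳ^τ − I_{dN})𝛉*‖, where empty products equal 1 and ‖·‖ is the Euclidean norm. -/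

import Mathlib

/-!
Since `∇fᵢ(θᵢ*) = 0`, the fundamental theorem of calculus along the segment from `θᵢ*` to `θᵢ^t`
gives `∇fᵢ(θᵢ^t) = Hᵢ^t (θᵢ^t − θᵢ*)`. Hence the error `e^t = 𝛉^t − 𝛉*` obeys the affine
recursion `e^{t+1} = (ℳ^t − αH^t) e^t + (ℳ^t − I) 𝛉*`, and unrolling the resulting scalar
inequality `‖e^{t+1}‖ ≤ ‖ℳ^t − αH^t‖ ‖e^t‖ + ‖(ℳ^t − I) 𝛉*‖` gives the bound.
-/

set_option maxHeartbeats 4000000 in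
set_option synthInstance.maxHeartbeats 2000000 in
/-- The block operator on `(ℝ^d)^N` (with the Euclidean/ℓ² norm on the concatenation)
determined by an `N × N` array of operators on `ℝ^d`: the `i`-th block of the output is
`∑ j, T i j (x j)`. -/
noncomputable def blockOp {N d : ℕ}
    (T : Fin N → Fin N → (EuclideanSpace ℝ (Fin d) →L[ℝ] EuclideanSpace ℝ (Fin d))) :
    PiLp 2 (fun _ : Fin N => EuclideanSpace ℝ (Fin d)) →L[ℝ]
      PiLp 2 (fun _ : Fin N => EuclideanSpace ℝ (Fin d)) :=
  LinearMap.toContinuousLinearMap <|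
    ((WithLp.linearEquiv 2 ℝ (∀ _ : Fin N, EuclideanSpace ℝ (Fin d))).symm.toLinearMap.comp
      ((LinearMap.pi fun i => ∑ j, (T i j).toLinearMap.comp (LinearMap.proj j)).comp
        (WithLp.linearEquiv 2 ℝ (∀ _ : Fin N, EuclideanSpace ℝ (Fin d))).toLinearMap))

/-- The averaged Hessian of `g` along the segment from `a` to `b`,
`∫₀¹ ∇²g(a + μ(b − a)) dμ`, as a continuous linear map. -/
noncomputable def avgHess {d : ℕ} (g : EuclideanSpace ℝ (Fin d) → ℝ)
    (a b : EuclideanSpace ℝ (Fin d)) :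
    EuclideanSpace ℝ (Fin d) →L[ℝ] EuclideanSpace ℝ (Fin d) :=
  ∫ μ in (0:ℝ)..1, fderiv ℝ (gradient g) (a + μ • (b - a))

open Finset

theorem le_prod_mul_add_sum_of_le_mul_add {u a b : ℕ → ℝ} (ha : ∀ t, 0 ≤ a t)
    (hu : ∀ t, u (t + 1) ≤ a t * u t + b t) (T : ℕ) :
    u T ≤ (∏ t ∈ range T, a t) * u 0 + ∑ τ ∈ range T, (∏ r ∈ Ico (τ + 1) T, a r) * b τ := by
  induction T with
  | zero => simp
  | succ T ih =>
    have hshift : ∀ τ ∈ range T,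
        a T * ((∏ r ∈ Ico (τ + 1) T, a r) * b τ) = (∏ r ∈ Ico (τ + 1) (T + 1), a r) * b τ := by
      intro τ hτ
      rw [prod_Ico_succ_top (mem_range.mp hτ)]
      ring
    calc u (T + 1) ≤ a T * u T + b T := hu T
      _ ≤ a T * ((∏ t ∈ range T, a t) * u 0 +
            ∑ τ ∈ range T, (∏ r ∈ Ico (τ + 1) T, a r) * b τ) + b T := by
        gcongr
        exact ha T
      _ = _ := by
        rw [prod_range_succ, sum_range_succ, Ico_self, prod_empty, mul_add, mul_sum,
          sum_congr rfl hshift]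
        ring

theorem ContDiff.gradient_of_succ {F : Type*} [NormedAddCommGroup F] [InnerProductSpace ℝ F]
    [CompleteSpace F] {g : F → ℝ} {n : WithTop ℕ∞} (hg : ContDiff ℝ (n + 1) g) :
    ContDiff ℝ n (gradient g) :=
  (InnerProductSpace.toDual ℝ F).symm.contDiff.comp (hg.fderiv_right le_rfl)

theorem intervalIntegral_fderiv_segment_apply_sub {E F : Type*} [NormedAddCommGroup E]
    [NormedSpace ℝ E] [NormedAddCommGroup F] [NormedSpace ℝ F] [CompleteSpace F] {G : E → F}
    (hG : ContDiff ℝ 1 G) (a b : E) :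
    (∫ μ in (0:ℝ)..1, fderiv ℝ G (a + μ • (b - a))) (b - a) = G b - G a := by
  have hsegment : ∀ μ : ℝ, HasDerivAt (fun μ : ℝ => a + μ • (b - a)) (b - a) μ := fun μ => by
    simpa using ((hasDerivAt_id μ).smul_const (b - a)).const_add a
  have hcont : Continuous fun μ : ℝ => fderiv ℝ G (a + μ • (b - a)) :=
    (hG.continuous_fderiv one_ne_zero).comp (by fun_prop)
  rw [ContinuousLinearMap.intervalIntegral_apply (hcont.intervalIntegrable _ _),
    intervalIntegral.integral_eq_sub_of_hasDerivAt
      (fun μ _ => ((hG.differentiable one_ne_zero _).hasFDerivAt).comp_hasDerivAt μ (hsegment μ))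
      ((hcont.clm_apply continuous_const).intervalIntegrable _ _)]
  simp

theorem avgHess_apply_sub {d : ℕ} {g : EuclideanSpace ℝ (Fin d) → ℝ} (hg : ContDiff ℝ 2 g)
    (a b : EuclideanSpace ℝ (Fin d)) :
    avgHess g a b (b - a) = gradient g b - gradient g a :=
  intervalIntegral_fderiv_segment_apply_sub (ContDiff.gradient_of_succ hg) a b

section BlockOp

variable {N d : ℕ}

theorem blockOp_apply
    (T : Fin N → Fin N → (EuclideanSpace ℝ (Fin d) →L[ℝ] EuclideanSpace ℝ (Fin d)))
    (x : PiLp 2 fun _ : Fin N => EuclideanSpace ℝ (Fin d)) (i : Fin N) :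
    blockOp T x i = ∑ j, T i j (x j) := by
  simp [blockOp]

theorem blockOp_diagonal_apply
    (D : Fin N → (EuclideanSpace ℝ (Fin d) →L[ℝ] EuclideanSpace ℝ (Fin d)))
    (x : PiLp 2 fun _ : Fin N => EuclideanSpace ℝ (Fin d)) (i : Fin N) :
    blockOp (fun i j => if i = j then D i else 0) x i = D i (x i) := by
  rw [blockOp_apply, sum_eq_single i (fun j _ hj => by simp [Ne.symm hj]) (by simp), if_pos rfl]

theorem blockOp_avgHess_apply_sub {f : Fin N → EuclideanSpace ℝ (Fin d) → ℝ}
    (hf : ∀ i, ContDiff ℝ 2 (f i)) {θstar : PiLp 2 fun _ : Fin N => EuclideanSpace ℝ (Fin d)}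
    (hstar : ∀ i, gradient (f i) (θstar i) = 0)
    (θ : PiLp 2 fun _ : Fin N => EuclideanSpace ℝ (Fin d)) (i : Fin N) :
    blockOp (fun i j => if i = j then avgHess (f i) (θstar i) (θ i) else 0) (θ - θstar) i =
      gradient (f i) (θ i) := by
  rw [blockOp_diagonal_apply, PiLp.sub_apply, avgHess_apply_sub (hf i), hstar i, sub_zero]

theorem multitask_gd_error_step {f : Fin N → EuclideanSpace ℝ (Fin d) → ℝ}
    (hf : ∀ i, ContDiff ℝ 2 (f i)) {θstar : PiLp 2 fun _ : Fin N => EuclideanSpace ℝ (Fin d)}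
    (hstar : ∀ i, gradient (f i) (θstar i) = 0) (M : Fin N → Fin N → Matrix (Fin d) (Fin d) ℝ)
    (α : ℝ) {θ θ' : PiLp 2 fun _ : Fin N => EuclideanSpace ℝ (Fin d)}
    (hupdate : ∀ i, θ' i =
      (∑ j, Matrix.toEuclideanCLM (𝕜 := ℝ) (M i j) (θ j)) - α • gradient (f i) (θ i)) :
    θ' - θstar =
      (blockOp (fun i j => Matrix.toEuclideanCLM (𝕜 := ℝ) (M i j)) -
          α • blockOp fun i j => if i = j then avgHess (f i) (θstar i) (θ i) else 0) (θ - θstar) +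
        (blockOp (fun i j => Matrix.toEuclideanCLM (𝕜 := ℝ) (M i j)) -
          ContinuousLinearMap.id ℝ (PiLp 2 fun _ : Fin N => EuclideanSpace ℝ (Fin d))) θstar := by
  ext i : 1
  simp only [PiLp.add_apply, PiLp.sub_apply, PiLp.smul_apply, sub_apply,
    smul_apply, ContinuousLinearMap.id_apply]
  rw [blockOp_avgHess_apply_sub hf hstar, hupdate, blockOp_apply, blockOp_apply]
  simp only [PiLp.sub_apply, map_sub, sum_sub_distrib]
  abel

end BlockOp

theorem multitask_gd_iterate_bound_general {d N : ℕ}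
    (f : Fin N → EuclideanSpace ℝ (Fin d) → ℝ) (hf : ∀ i, ContDiff ℝ 2 (f i))
    (θstar : PiLp 2 fun _ : Fin N => EuclideanSpace ℝ (Fin d))
    (hstar : ∀ i, gradient (f i) (θstar i) = 0)
    (M : ℕ → Fin N → Fin N → Matrix (Fin d) (Fin d) ℝ)
    (α : ℝ)
    (θ : ℕ → PiLp 2 fun _ : Fin N => EuclideanSpace ℝ (Fin d))
    (hupdate : ∀ t i, θ (t + 1) i =
      (∑ j, Matrix.toEuclideanCLM (𝕜 := ℝ) (M t i j) (θ t j)) - α • gradient (f i) (θ t i))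
    (ℳop Hop : ℕ → (PiLp 2 fun _ : Fin N => EuclideanSpace ℝ (Fin d)) →L[ℝ]
      (PiLp 2 fun _ : Fin N => EuclideanSpace ℝ (Fin d)))
    (hℳop : ∀ t, ℳop t = blockOp fun i j => Matrix.toEuclideanCLM (𝕜 := ℝ) (M t i j))
    (hHop : ∀ t, Hop t = blockOp fun i j =>
      if i = j then avgHess (f i) (θstar i) (θ t i) else 0) :
    ∀ T : ℕ, 1 ≤ T →
      ‖θ T - θstar‖ ≤
        (∏ τ ∈ Finset.range T, ‖ℳop τ - α • Hop τ‖) * ‖θ 0 - θstar‖ +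
          ∑ τ ∈ Finset.range T,
            (∏ r ∈ Finset.Ico (τ + 1) T, ‖ℳop r - α • Hop r‖) *
              ‖(ℳop τ - ContinuousLinearMap.id ℝ
                  (PiLp 2 fun _ : Fin N => EuclideanSpace ℝ (Fin d))) θstar‖ := by
  intro T _
  refine le_prod_mul_add_sum_of_le_mul_add (u := fun t => ‖θ t - θstar‖)
    (fun t => norm_nonneg (ℳop t - α • Hop t)) (fun t => ?_) T
  have hstep := multitask_gd_error_step hf hstar (M t) α (hupdate t)
  rw [← hℳop, ← hHop] at hstep
  rw [hstep]
  exact (norm_add_le _ _).trans (add_le_add_left ((ℳop t - α • Hop t).le_opNorm _) _)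

/-- For the multi-task gradient descent iteration
`θᵢ^{t+1} = ∑ⱼ Mᵢⱼ^t θⱼ^t − α∇fᵢ(θᵢ^t)` (with each `ℳ^t` a symmetric block matrix with
`d × d` diagonal blocks), writing `H^t = diag(H₁^t, …, H_N^t)` with
`Hᵢ^t = ∫₀¹ ∇²fᵢ(θᵢ* + μ(θᵢ^t − θᵢ*)) dμ`, we have for every `T ≥ 1`:
`‖𝛉^T − 𝛉*‖ ≤ (∏_{τ<T} ρ(ℳ^τ − αH^τ))·‖𝛉⁰ − 𝛉*‖
  + ∑_{τ<T} (∏_{τ<r<T} ρ(ℳ^r − αH^r))·‖(ℳ^τ − I)𝛉*‖`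
(for the symmetric matrices `ℳ^t − αH^t` the spectral radius `ρ` equals the operator
norm). -/
theorem multitask_gd_iterate_bound {d N : ℕ}
    (f : Fin N → EuclideanSpace ℝ (Fin d) → ℝ) (hf : ∀ i, ContDiff ℝ 2 (f i))
    (θstar : PiLp 2 fun _ : Fin N => EuclideanSpace ℝ (Fin d))
    (hstar : ∀ i, gradient (f i) (θstar i) = 0)
    (M : ℕ → Fin N → Fin N → Matrix (Fin d) (Fin d) ℝ)
    (hMdiag : ∀ t i j, (M t i j).IsDiag)
    (hMsymm : ∀ t i j, M t i j = M t j i)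
    (α : ℝ)
    (θ : ℕ → PiLp 2 fun _ : Fin N => EuclideanSpace ℝ (Fin d))
    (hupdate : ∀ t i, θ (t + 1) i =
      (∑ j, Matrix.toEuclideanCLM (𝕜 := ℝ) (M t i j) (θ t j)) - α • gradient (f i) (θ t i))
    (ℳop Hop : ℕ → (PiLp 2 fun _ : Fin N => EuclideanSpace ℝ (Fin d)) →L[ℝ]
      (PiLp 2 fun _ : Fin N => EuclideanSpace ℝ (Fin d)))
    (hℳop : ∀ t, ℳop t = blockOp fun i j => Matrix.toEuclideanCLM (𝕜 := ℝ) (M t i j))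
    (hHop : ∀ t, Hop t = blockOp fun i j =>
      if i = j then avgHess (f i) (θstar i) (θ t i) else 0) :
    ∀ T : ℕ, 1 ≤ T →
      ‖θ T - θstar‖ ≤
        (∏ τ ∈ Finset.range T, ‖ℳop τ - α • Hop τ‖) * ‖θ 0 - θstar‖ +
          ∑ τ ∈ Finset.range T,
            (∏ r ∈ Finset.Ico (τ + 1) T, ‖ℳop r - α • Hop r‖) *
              ‖(ℳop τ - ContinuousLinearMap.id ℝ
                  (PiLp 2 fun _ : Fin N => EuclideanSpace ℝ (Fin d))) θstar‖ :=
  multitask_gd_iterate_bound_general f hf θstar hstar M α θ hupdate ℳop Hop hℳop hHop
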